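/- arXiv:1806.01051 — 4 statements merged into one kernel-verified Lean document; each statement's English description precedes it below -/
import Mathlib

section
/- Let X and Y be real normed spaces and T : X → Y a bounded linear operator. For x ∈ X with ‖x‖ = 1, x ∈ M_T if and only if there exist semi-inner-products [·,·]_X on X and [·,·]_Y on Y (each generating the respective norm) such that [Tz, Tx]_Y = ‖T‖² [z, x]_X for every z ∈ X. -/
/-- A semi-inner-product generating the norm on a real normed space. -/
def IsSemiInnerProduct {X : Type*} [NormedAddCommGroup X] [NormedSpace ℝ X]
    (p : X → X → ℝ) : Prop :=
  (∀ x y z : X, p (x + y) z = p x z + p y z) ∧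
  (∀ (l : ℝ) (x y : X), p (l • x) y = l * p x y) ∧
  (∀ (l : ℝ) (x y : X), p x (l • y) = l * p x y) ∧
  (∀ x : X, p x x = ‖x‖ ^ 2) ∧
  (∀ x y : X, (p x y) ^ 2 ≤ p x x * p y y)


/-!
A semi-inner-product generating the norm is obtained from any selection `y ↦ ψ y` of norming
functionals of norm at most one that depends only on the line `ℝ ∙ y`, via
`[z, y] = ψ y y * ψ y z`; the selection may be prescribed freely on one line. If `‖T x‖ = ‖T‖`,
a norming functional `g` at `T x` pulls back to `g ∘ T = ‖T‖ • f` with `f` norming at `x`, and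
semi-inner-products pinned to `g` at `T x` and to `f` at `x` satisfy the identity. Conversely,
taking `z = x` in the identity gives `‖T x‖² = ‖T‖²`.
-/

section NormingSelection

variable {X : Type*} [NormedAddCommGroup X] [NormedSpace ℝ X]

lemma exists_norming_dual (y : X) : ∃ g : StrongDual ℝ X, ‖g‖ ≤ 1 ∧ g y = ‖y‖ := by
  simpa using exists_dual_vector'' ℝ y

lemma isSemiInnerProduct_of_norming (ψ : X → StrongDual ℝ X) (hψ : ∀ y, ‖ψ y‖ ≤ 1)
    (hψy : ∀ y, |ψ y y| = ‖y‖) (hline : ∀ (l : ℝ) y, l ≠ 0 → ψ (l • y) = ψ y) :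
    IsSemiInnerProduct fun z y => ψ y y * ψ y z := by
  have hsq (y : X) : ψ y y * ψ y y = ‖y‖ ^ 2 := by rw [← sq, ← sq_abs, hψy]
  refine ⟨?_, ?_, ?_, hsq, ?_⟩ <;> dsimp only
  · intro a b c; rw [map_add, mul_add]
  · intro l a b; rw [map_smul, smul_eq_mul, mul_left_comm]
  · intro l a b
    rcases eq_or_ne l 0 with rfl | hl
    · simp
    · rw [hline l b hl, map_smul, smul_eq_mul]; ring
  · intro a b
    have hba : |ψ b a| ≤ ‖a‖ := by simpa using (ψ b).le_of_opNorm_le (hψ b) a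
    calc (ψ b b * ψ b a) ^ 2 = |ψ b b| ^ 2 * |ψ b a| ^ 2 := by rw [sq_abs, sq_abs, mul_pow]
      _ ≤ ‖b‖ ^ 2 * ‖a‖ ^ 2 := by rw [hψy]; gcongr
      _ = ψ a a * ψ a a * (ψ b b * ψ b b) := by rw [hsq, hsq]; ring

lemma exists_norming_selection (x₀ : X) (g₀ : StrongDual ℝ X) (hg₀ : ‖g₀‖ ≤ 1)
    (hg₀x₀ : |g₀ x₀| = ‖x₀‖) :
    ∃ ψ : X → StrongDual ℝ X, (∀ y, ‖ψ y‖ ≤ 1) ∧ (∀ y, |ψ y y| = ‖y‖) ∧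
      (∀ (l : ℝ) y, l ≠ 0 → ψ (l • y) = ψ y) ∧ ψ x₀ = g₀ := by
  classical
  let Norming (S : Submodule ℝ X) (g : StrongDual ℝ X) : Prop :=
    ‖g‖ ≤ 1 ∧ ∀ v ∈ S, |g v| = ‖v‖
  have norming_span (y : X) (g : StrongDual ℝ X) (hg : ‖g‖ ≤ 1) (hgy : |g y| = ‖y‖) :
      Norming (ℝ ∙ y) g := by
    refine ⟨hg, fun v hv => ?_⟩
    obtain ⟨c, rfl⟩ := Submodule.mem_span_singleton.mp hv
    rw [map_smul, smul_eq_mul, abs_mul, hgy, norm_smul, Real.norm_eq_abs]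
  let N : Submodule ℝ X → StrongDual ℝ X := Function.update
    (fun S => if h : ∃ g, Norming S g then h.choose else 0) (ℝ ∙ x₀) g₀
  have hN (y : X) : Norming (ℝ ∙ y) (N (ℝ ∙ y)) := by
    by_cases hy : ℝ ∙ y = ℝ ∙ x₀
    · rw [hy]
      simp only [N, Function.update_self]
      exact norming_span x₀ g₀ hg₀ hg₀x₀
    · have hex : ∃ g, Norming (ℝ ∙ y) g := by
        obtain ⟨g, hg, hgy⟩ := exists_norming_dual y
        exact ⟨g, norming_span y g hg (by rw [hgy, abs_norm])⟩
      simp only [N, Function.update_of_ne hy, dif_pos hex]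
      exact hex.choose_spec
  refine ⟨fun y => N (ℝ ∙ y), fun y => (hN y).1,
    fun y => (hN y).2 y (Submodule.mem_span_singleton_self y), fun l y hl => ?_,
    Function.update_self _ _ _⟩
  dsimp only
  rw [Submodule.span_singleton_smul_eq (IsUnit.mk0 l hl)]

lemma exists_isSemiInnerProduct_apply_right (x₀ : X) (g₀ : StrongDual ℝ X) (hg₀ : ‖g₀‖ ≤ 1)
    (hg₀x₀ : g₀ x₀ = ‖x₀‖) :
    ∃ p : X → X → ℝ, IsSemiInnerProduct p ∧ ∀ z, p z x₀ = ‖x₀‖ * g₀ z := by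
  obtain ⟨ψ, hψ, hψy, hline, rfl⟩ :=
    exists_norming_selection x₀ g₀ hg₀ (by rw [hg₀x₀, abs_norm])
  exact ⟨_, isSemiInnerProduct_of_norming ψ hψ hψy hline, fun z => by rw [hg₀x₀]⟩

lemma exists_norming_dual_comp_eq_smul {Y : Type*} [NormedAddCommGroup Y] [NormedSpace ℝ Y]
    (T : X →L[ℝ] Y) {x : X} (hTx : ‖T x‖ = ‖T‖ * ‖x‖) (g : StrongDual ℝ Y) (hg : ‖g‖ ≤ 1)
    (hgTx : g (T x) = ‖T x‖) :
    ∃ f : StrongDual ℝ X, ‖f‖ ≤ 1 ∧ f x = ‖x‖ ∧ g ∘L T = ‖T‖ • f := by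
  rcases eq_or_ne ‖T‖ 0 with hT | hT
  · obtain ⟨f, hf, hfx⟩ := exists_norming_dual x
    refine ⟨f, hf, hfx, ?_⟩
    rw [hT, zero_smul, norm_eq_zero.mp hT, ContinuousLinearMap.comp_zero]
  · refine ⟨‖T‖⁻¹ • g ∘L T, ?_, ?_, ?_⟩
    · calc ‖‖T‖⁻¹ • g ∘L T‖ ≤ ‖T‖⁻¹ * (‖g‖ * ‖T‖) := by
            rw [norm_smul, norm_inv, norm_norm]
            gcongr
            exact g.opNorm_comp_le T
        _ ≤ ‖T‖⁻¹ * (1 * ‖T‖) := by gcongr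
        _ = 1 := by field_simp
    · rw [smul_apply, ContinuousLinearMap.comp_apply, hgTx, hTx,
        smul_eq_mul, inv_mul_cancel_left₀ hT]
    · rw [smul_smul, mul_inv_cancel₀ hT, one_smul]

end NormingSelection

theorem stmt_1 {X Y : Type*} [NormedAddCommGroup X] [NormedSpace ℝ X]
    [NormedAddCommGroup Y] [NormedSpace ℝ Y]
    (T : X →L[ℝ] Y) (x : X) (hx : ‖x‖ = 1) :
    ‖T x‖ = ‖T‖ ↔
      ∃ (pX : X → X → ℝ) (pY : Y → Y → ℝ),
        IsSemiInnerProduct pX ∧ IsSemiInnerProduct pY ∧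
        ∀ z : X, pY (T z) (T x) = ‖T‖ ^ 2 * pX z x := by
  constructor
  · intro hTx
    obtain ⟨g, hg, hgTx⟩ := exists_norming_dual (T x)
    obtain ⟨f, hf, hfx, hgT⟩ :=
      exists_norming_dual_comp_eq_smul T (by rw [hTx, hx, mul_one]) g hg hgTx
    obtain ⟨pY, hpY, hpYTx⟩ := exists_isSemiInnerProduct_apply_right (T x) g hg hgTx
    obtain ⟨pX, hpX, hpXx⟩ := exists_isSemiInnerProduct_apply_right x f hf hfx
    refine ⟨pX, pY, hpX, hpY, fun z => ?_⟩
    have hgTz : g (T z) = ‖T‖ * f z := by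
      simpa using DFunLike.congr_fun hgT z
    rw [hpYTx, hpXx, hgTz, hTx, hx]
    ring
  · rintro ⟨pX, pY, hpX, hpY, h⟩
    have hsq : ‖T x‖ ^ 2 = ‖T‖ ^ 2 := by
      simpa [hpY.2.2.2.1, hpX.2.2.2.1, hx] using h x
    exact (pow_left_inj₀ (norm_nonneg _) (norm_nonneg _) two_ne_zero).mp hsq
end

section
/- Let X and Y be real Banach spaces and T : X → Y a nonzero bounded linear operator. If x ∈ m_T, then T(x⁺) ⊆ (Tx)⁺ and T(x⁻) ⊆ (Tx)⁻; that is, for every y ∈ X: if ‖x + t y‖ ≥ ‖x‖ for all t ≥ 0, then ‖Tx + t Ty‖ ≥ ‖Tx‖ for all t ≥ 0, and if ‖x + t y‖ ≥ ‖x‖ for all t ≤ 0, then ‖Tx + t Ty‖ ≥ ‖Tx‖ for all t ≤ 0. -/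
/-! By homogeneity, `minNorm T * ‖w‖ ≤ ‖T w‖` for every `w`. Hence if `‖x + t • y‖ ≥ ‖x‖ = 1`,
then `‖T x + t • T y‖ ≥ minNorm T = ‖T x‖`, whatever the sign of `t`. -/

/-- The minimum norm of a bounded linear operator. -/
noncomputable def minNorm {X Y : Type*} [NormedAddCommGroup X] [NormedSpace ℝ X]
    [NormedAddCommGroup Y] [NormedSpace ℝ Y] (T : X →L[ℝ] Y) : ℝ :=
  sInf {r : ℝ | ∃ x : X, ‖x‖ = 1 ∧ r = ‖T x‖}

section MinNorm

variable {X Y : Type*} [NormedAddCommGroup X] [NormedSpace ℝ X]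
  [NormedAddCommGroup Y] [NormedSpace ℝ Y] (T : X →L[ℝ] Y)

lemma minNorm_nonneg : 0 ≤ minNorm T :=
  Real.sInf_nonneg (by rintro _ ⟨z, -, rfl⟩; exact norm_nonneg _)

lemma minNorm_le_norm_apply {z : X} (hz : ‖z‖ = 1) : minNorm T ≤ ‖T z‖ :=
  csInf_le ⟨0, by rintro _ ⟨w, -, rfl⟩; exact norm_nonneg _⟩ ⟨z, hz, rfl⟩

lemma minNorm_mul_norm_le_norm_apply (w : X) : minNorm T * ‖w‖ ≤ ‖T w‖ := by
  rcases eq_or_ne w 0 with rfl | hw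
  · simp
  have h := minNorm_le_norm_apply T (z := ‖w‖⁻¹ • w) (norm_smul_inv_norm hw)
  rw [map_smul, norm_smul, norm_inv, norm_norm] at h
  rw [mul_comm]
  exact (le_inv_mul_iff₀ (norm_pos_iff.2 hw)).1 h

lemma norm_apply_le_norm_apply_of_minNorm {x w : X} (hx : ‖x‖ = 1) (hxm : ‖T x‖ = minNorm T)
    (hxw : ‖x‖ ≤ ‖w‖) : ‖T x‖ ≤ ‖T w‖ :=
  calc ‖T x‖ = minNorm T * ‖x‖ := by rw [hx, mul_one, hxm]
    _ ≤ minNorm T * ‖w‖ := mul_le_mul_of_nonneg_left hxw (minNorm_nonneg T)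
    _ ≤ ‖T w‖ := minNorm_mul_norm_le_norm_apply T w

end MinNorm

theorem stmt_2_general {X Y : Type*} [NormedAddCommGroup X] [NormedSpace ℝ X]
    [NormedAddCommGroup Y] [NormedSpace ℝ Y]
    (T : X →L[ℝ] Y)
    (x : X) (hx : ‖x‖ = 1) (hxm : ‖T x‖ = minNorm T) (y : X) :
    ((∀ t : ℝ, 0 ≤ t → ‖x‖ ≤ ‖x + t • y‖) →
      ∀ t : ℝ, 0 ≤ t → ‖T x‖ ≤ ‖T x + t • T y‖) ∧
    ((∀ t : ℝ, t ≤ 0 → ‖x‖ ≤ ‖x + t • y‖) →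
      ∀ t : ℝ, t ≤ 0 → ‖T x‖ ≤ ‖T x + t • T y‖) := by
  have norm_Tx_le (t : ℝ) (h : ‖x‖ ≤ ‖x + t • y‖) : ‖T x‖ ≤ ‖T x + t • T y‖ := by
    simpa using norm_apply_le_norm_apply_of_minNorm T hx hxm h
  exact ⟨fun h t ht => norm_Tx_le t (h t ht), fun h t ht => norm_Tx_le t (h t ht)⟩

theorem stmt_2 {X Y : Type*} [NormedAddCommGroup X] [NormedSpace ℝ X]
    [CompleteSpace X] [Nontrivial X]
    [NormedAddCommGroup Y] [NormedSpace ℝ Y] [CompleteSpace Y]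
    (T : X →L[ℝ] Y) (hT : T ≠ 0)
    (x : X) (hx : ‖x‖ = 1) (hxm : ‖T x‖ = minNorm T) (y : X) :
    ((∀ t : ℝ, 0 ≤ t → ‖x‖ ≤ ‖x + t • y‖) →
      ∀ t : ℝ, 0 ≤ t → ‖T x‖ ≤ ‖T x + t • T y‖) ∧
    ((∀ t : ℝ, t ≤ 0 → ‖x‖ ≤ ‖x + t • y‖) →
      ∀ t : ℝ, t ≤ 0 → ‖T x‖ ≤ ‖T x + t • T y‖) :=
  stmt_2_general T x hx hxm y
end

section
/- Let X be a nontrivial finite-dimensional Banach space over 𝕜 (𝕜 = ℝ or ℂ) and let T : X → X be a bounded linear operator. Then there exists x ∈ X with ‖x‖ = 1 such that T preserves Birkhoff–James orthogonality at x, i.e., for every y ∈ X, x ⊥_B y implies Tx ⊥_B Ty. -/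
/-!
A unit vector `x` at which `‖T ·‖` attains its minimum on the (compact) unit sphere satisfies
`‖T x‖ * ‖z‖ ≤ ‖T z‖` for every `z`, by homogeneity. Hence if `x ⊥_B y`, then
`‖T x + λ T y‖ ≥ ‖T x‖ * ‖x + λ y‖ ≥ ‖T x‖`.
-/

/-- Birkhoff–James orthogonality over the field `𝕜`. -/
def BirkhoffOrth (𝕜 : Type*) {X : Type*} [RCLike 𝕜] [NormedAddCommGroup X]
    [NormedSpace 𝕜 X] (x y : X) : Prop :=
  ∀ lam : 𝕜, ‖x‖ ≤ ‖x + lam • y‖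

section MinimumModulus

variable {𝕜 X Y : Type*} [RCLike 𝕜] [NormedAddCommGroup X] [NormedSpace 𝕜 X]
  [NormedAddCommGroup Y] [NormedSpace 𝕜 Y]

theorem ContinuousLinearMap.exists_isMinOn_norm_apply_sphere [FiniteDimensional 𝕜 X]
    [Nontrivial X] (f : X →L[𝕜] Y) :
    ∃ x ∈ Metric.sphere (0 : X) 1, IsMinOn (fun z => ‖f z‖) (Metric.sphere 0 1) x := by
  have : ProperSpace X := FiniteDimensional.proper 𝕜 X
  obtain ⟨v⟩ := NormedSpace.sphere_nonempty_rclike 𝕜 (E := X) zero_le_one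
  exact (isCompact_sphere (0 : X) 1).exists_isMinOn ⟨v, v.2⟩ (by fun_prop)

theorem LinearMap.norm_apply_mul_norm_le_of_isMinOn {f : X →ₗ[𝕜] Y} {x : X}
    (hx : IsMinOn (fun z => ‖f z‖) (Metric.sphere 0 1) x) (z : X) :
    ‖f x‖ * ‖z‖ ≤ ‖f z‖ := by
  obtain rfl | hz := eq_or_ne z 0
  · simp
  have hunit : (‖z‖⁻¹ : 𝕜) • z ∈ Metric.sphere (0 : X) 1 := by
    simpa using norm_smul_inv_norm (𝕜 := 𝕜) hz
  have hz' : ‖z‖ ≠ 0 := norm_ne_zero_iff.mpr hz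
  have hle : ‖f x‖ ≤ ‖z‖⁻¹ * ‖f z‖ := by
    simpa [norm_smul] using hx hunit
  calc ‖f x‖ * ‖z‖ ≤ ‖z‖⁻¹ * ‖f z‖ * ‖z‖ := by gcongr
    _ = ‖f z‖ := by field_simp

theorem LinearMap.birkhoffOrth_map_of_norm_apply_mul_norm_le {f : X →ₗ[𝕜] Y} {x y : X}
    (hx : ‖x‖ = 1) (hmin : ∀ z, ‖f x‖ * ‖z‖ ≤ ‖f z‖) (hxy : BirkhoffOrth 𝕜 x y) :
    BirkhoffOrth 𝕜 (f x) (f y) := fun lam =>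
  calc ‖f x‖ = ‖f x‖ * ‖x‖ := by rw [hx, mul_one]
    _ ≤ ‖f x‖ * ‖x + lam • y‖ := by gcongr; exact hxy lam
    _ ≤ ‖f (x + lam • y)‖ := hmin _
    _ = ‖f x + lam • f y‖ := by rw [map_add, map_smul]

end MinimumModulus

theorem stmt_4 {𝕜 X : Type*} [RCLike 𝕜]
    [NormedAddCommGroup X] [NormedSpace 𝕜 X] [FiniteDimensional 𝕜 X] [Nontrivial X]
    (T : X →L[𝕜] X) :
    ∃ x : X, ‖x‖ = 1 ∧ ∀ y : X, BirkhoffOrth 𝕜 x y → BirkhoffOrth 𝕜 (T x) (T y) := by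
  obtain ⟨x, hx, hmin⟩ := T.exists_isMinOn_norm_apply_sphere
  have hx : ‖x‖ = 1 := mem_sphere_zero_iff_norm.mp hx
  exact ⟨x, hx, fun y => T.toLinearMap.birkhoffOrth_map_of_norm_apply_mul_norm_le hx
    (T.toLinearMap.norm_apply_mul_norm_le_of_isMinOn hmin)⟩
end

section
/- Let X be a reflexive, strictly convex real Banach space (the canonical inclusion of X into its double dual is surjective), Y a real Banach space, and T : X → Y a bounded linear operator of rank one (the range of T is a one-dimensional subspace of Y). Then there exists x ∈ X with ‖x‖ = 1 such that M_T = {x, −x}. -/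
/-!
A rank-one operator factors as `T = g.smulRight u` with `g` a functional and `‖u‖ = 1`, so `T`
and `g` attain their norms at the same unit vectors. By reflexivity a norming functional of `g`
is evaluation at some unit vector `x`, so `g x = ‖g‖`; since `|g z| = ‖g‖` means `g (±z) = ‖g‖`,
it remains to see that `g` attains the value `‖g‖` at only one unit vector. If `g x = g y = ‖g‖`
then `‖x + y‖ ≥ g (x + y) / ‖g‖ = 2`, and strict convexity forces `x = y`.
-/

open Module NormedSpace

namespace ContinuousLinearMap

variable {𝕜 E F : Type*}

section NontriviallyNormed

variable [NontriviallyNormedField 𝕜] [SeminormedAddCommGroup E] [NormedSpace 𝕜 E]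
  [SeminormedAddCommGroup F] [NormedSpace 𝕜 F]

/-- The norm attainment set `M_T`. -/
def normAttainmentSet (T : E →L[𝕜] F) : Set E :=
  {x | ‖x‖ = 1 ∧ ‖T x‖ = ‖T‖}

theorem normAttainmentSet_smulRight (g : StrongDual 𝕜 E) {u : F} (hu : ‖u‖ = 1) :
    (g.smulRight u).normAttainmentSet = g.normAttainmentSet := by
  ext x
  simp [normAttainmentSet, norm_smul, hu]

end NontriviallyNormed

theorem exists_eq_smulRight_of_finrank_range_eq_one [RCLike 𝕜] [NormedAddCommGroup E]
    [NormedSpace 𝕜 E] [NormedAddCommGroup F] [NormedSpace 𝕜 F] {T : E →L[𝕜] F}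
    (hT : finrank 𝕜 (LinearMap.range (T : E →ₗ[𝕜] F)) = 1) :
    ∃ (g : StrongDual 𝕜 E) (u : F), ‖u‖ = 1 ∧ T = g.smulRight u := by
  obtain ⟨v, hv0, hv⟩ := finrank_eq_one_iff'.mp hT
  have hv0' : (v : F) ≠ 0 := by simpa using hv0
  set u : F := (‖(v : F)‖⁻¹ : 𝕜) • (v : F)
  have hu : ‖u‖ = 1 := norm_smul_inv_norm hv0'
  obtain ⟨f, -, hfu⟩ := exists_dual_vector 𝕜 u (by simp [hu])
  refine ⟨f.comp T, u, hu, ext fun x => ?_⟩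
  obtain ⟨c, hc⟩ := hv ⟨T x, LinearMap.mem_range_self _ x⟩
  have hTx : T x = (c * ‖(v : F)‖) • u := by
    rw [mul_smul, smul_inv_smul₀ (by simpa using hv0')]
    exact (congrArg Subtype.val hc).symm
  simp [hTx, hfu, hu]

end ContinuousLinearMap

open ContinuousLinearMap

theorem StrongDual.exists_norm_eq_one_apply_eq_norm [RCLike 𝕜] [NormedAddCommGroup E]
    [NormedSpace 𝕜 E] (hrefl : Function.Surjective (inclusionInDoubleDual 𝕜 E))
    {f : StrongDual 𝕜 E} (hf : f ≠ 0) : ∃ x : E, ‖x‖ = 1 ∧ f x = ‖f‖ := by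
  obtain ⟨Φ, hΦ, hΦf⟩ := exists_dual_vector 𝕜 f (norm_ne_zero_iff.mpr hf)
  obtain ⟨x, rfl⟩ := hrefl Φ
  exact ⟨x, ((inclusionInDoubleDualLi 𝕜).norm_map x).symm.trans hΦ, hΦf⟩

theorem StrongDual.eq_of_apply_eq_norm [NormedAddCommGroup E] [NormedSpace ℝ E]
    [StrictConvexSpace ℝ E] {f : StrongDual ℝ E} (hf : f ≠ 0) {x y : E} (hx : ‖x‖ = 1)
    (hy : ‖y‖ = 1) (hfx : f x = ‖f‖) (hfy : f y = ‖f‖) : x = y := by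
  have hf_pos : 0 < ‖f‖ := norm_pos_iff.mpr hf
  have h_two : 2 * ‖f‖ ≤ ‖f‖ * ‖x + y‖ :=
    calc 2 * ‖f‖ = f (x + y) := by rw [map_add, hfx, hfy]; ring
      _ ≤ ‖f (x + y)‖ := Real.le_norm_self _
      _ ≤ ‖f‖ * ‖x + y‖ := f.le_opNorm _
  refine eq_of_norm_eq_of_norm_add_eq (hx.trans hy.symm) (le_antisymm (norm_add_le x y) ?_)
  rw [hx, hy]
  nlinarith

theorem StrongDual.exists_normAttainmentSet_eq_pair [NormedAddCommGroup E] [NormedSpace ℝ E]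
    [StrictConvexSpace ℝ E] (hrefl : Function.Surjective (inclusionInDoubleDual ℝ E))
    {f : StrongDual ℝ E} (hf : f ≠ 0) :
    ∃ x : E, ‖x‖ = 1 ∧ f.normAttainmentSet = {x, -x} := by
  obtain ⟨x, hx, hfx⟩ := exists_norm_eq_one_apply_eq_norm hrefl hf
  refine ⟨x, hx, Set.ext fun z => ⟨fun ⟨hz, hfz⟩ => ?_, ?_⟩⟩
  · rw [Real.norm_eq_abs] at hfz
    rcases abs_choice (f z) with h | h
    · exact .inl (eq_of_apply_eq_norm hf hz hx (h ▸ hfz) hfx)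
    · refine .inr (neg_eq_iff_eq_neg.mp (eq_of_apply_eq_norm hf (by rwa [norm_neg]) hx ?_ hfx))
      rw [map_neg, ← h, hfz]
  · rintro (rfl | rfl) <;> simp [normAttainmentSet, hx, hfx]

theorem stmt_15_general {X Y : Type*}
    [NormedAddCommGroup X] [NormedSpace ℝ X] [StrictConvexSpace ℝ X]
    [NormedAddCommGroup Y] [NormedSpace ℝ Y]
    (hrefl : Function.Surjective (NormedSpace.inclusionInDoubleDual ℝ X))
    (T : X →L[ℝ] Y)
    (hrank : Module.finrank ℝ (LinearMap.range (T : X →ₗ[ℝ] Y)) = 1) :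
    ∃ x : X, ‖x‖ = 1 ∧ {z : X | ‖z‖ = 1 ∧ ‖T z‖ = ‖T‖} = {x, -x} := by
  obtain ⟨g, u, hu, rfl⟩ := exists_eq_smulRight_of_finrank_range_eq_one hrank
  have hg : g ≠ 0 := by
    rintro rfl
    rw [zero_smulRight, toLinearMap_zero, LinearMap.range_zero, finrank_bot] at hrank
    exact zero_ne_one hrank
  obtain ⟨x, hx, hset⟩ := StrongDual.exists_normAttainmentSet_eq_pair hrefl hg
  exact ⟨x, hx, (normAttainmentSet_smulRight g hu).trans hset⟩

theorem stmt_15 {X Y : Type*}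
    [NormedAddCommGroup X] [NormedSpace ℝ X] [CompleteSpace X] [StrictConvexSpace ℝ X]
    [NormedAddCommGroup Y] [NormedSpace ℝ Y] [CompleteSpace Y]
    (hrefl : Function.Surjective (NormedSpace.inclusionInDoubleDual ℝ X))
    (T : X →L[ℝ] Y)
    (hrank : Module.finrank ℝ (LinearMap.range (T : X →ₗ[ℝ] Y)) = 1) :
    ∃ x : X, ‖x‖ = 1 ∧ {z : X | ‖z‖ = 1 ∧ ‖T z‖ = ‖T‖} = {x, -x} :=
  stmt_15_general hrefl T hrank
end
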